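/- (Add Lemma) Consider ℓ functions f_i: [0,1] → ℝ, 1 ≤ i ≤ ℓ, where each f_i is realized by a ReLU network in N(N_i, L_i). Then the sum f = Σ_{i=1}^ℓ f_i is realized by a ReLU network in N(Σ_{i=1}^ℓ (N_i + 2L_i − 2) − ℓ + 1, Σ_{i=1}^ℓ L_i − ℓ + 1). -/

import Mathlib

open MeasureTheory Set ENNReal

noncomputable section

/-- Coordinatewise ReLU activation. -/
def relu {m : ℕ} (x : Fin m → ℝ) : Fin m → ℝ := fun i => max 0 (x i)

/-- `M` is an affine map `ℝ^m → ℝ^k`. -/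
def IsAffineMap {m k : ℕ} (M : (Fin m → ℝ) → (Fin k → ℝ)) : Prop :=
  ∃ (A : Matrix (Fin k) (Fin m) ℝ) (b : Fin k → ℝ), ∀ x, M x = A.mulVec x + b

/-- `RealizedBy L m0 mL φ N` : the map `φ : ℝ^{m0} → ℝ^{mL}` is a fully connected feedforward
ReLU network of depth `L` and size `N`, i.e. `φ = M_L ∘ ReLU ∘ M_{L-1} ∘ ⋯ ∘ ReLU ∘ M_1` for
affine maps `M_i : ℝ^{m_{i-1}} → ℝ^{m_i}` with `m_1, …, m_{L-1} > 0` and `N = m_1 + ⋯ + m_L`. -/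
def RealizedBy : (L : ℕ) → (m0 mL : ℕ) → ((Fin m0 → ℝ) → (Fin mL → ℝ)) → ℕ → Prop
  | 0, _, _, _, _ => False
  | 1, _, mL, φ, N => IsAffineMap φ ∧ N = mL
  | (L + 2), m0, mL, φ, N =>
      ∃ (m1 : ℕ) (M1 : (Fin m0 → ℝ) → (Fin m1 → ℝ))
        (ψ : (Fin m1 → ℝ) → (Fin mL → ℝ)) (N' : ℕ),
        0 < m1 ∧ IsAffineMap M1 ∧ RealizedBy (L + 1) m1 mL ψ N' ∧
        N = m1 + N' ∧ ∀ x, φ x = ψ (relu (M1 x))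

/-- `f : [0,1] → ℝ` is realized (on `[0,1]`) by a ReLU network in `N(N, L)`. -/
def RealizesOn (f : ℝ → ℝ) (N L : ℕ) : Prop :=
  ∃ φ : (Fin 1 → ℝ) → (Fin 1 → ℝ), RealizedBy L 1 1 φ N ∧
    ∀ x ∈ Set.Icc (0 : ℝ) 1, φ (fun _ => x) 0 = f x

/-!
The sum is computed by chaining one block per summand. The block for `f i` runs the network for
`f i` in parallel with two chains of ReLUs that carry the input `x` and the running sum `s`; a
ReLU chain is the identity on nonnegative inputs, and `s` is made nonnegative by subtracting a
lower bound of the running sum on `[0, 1]`, which exists since networks are continuous. A block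
has depth `L i` and `N i + 2 L i - 1` neurons, and at each junction the last affine map of one
block merges with the first of the next, saving one layer and two neurons.
-/
theorem isAffineMap_iff_forall_apply {m k : ℕ} {M : (Fin m → ℝ) → (Fin k → ℝ)} :
    IsAffineMap M ↔ ∀ i, ∃ (w : Fin m → ℝ) (c : ℝ), ∀ x, M x i = w ⬝ᵥ x + c := by
  constructor
  · rintro ⟨A, b, hM⟩ i
    exact ⟨A i, b i, fun x => by rw [hM]; rfl⟩
  · intro h
    choose w c hw using h
    exact ⟨Matrix.of w, c, fun x => funext fun i => hw i x⟩

namespace IsAffineMap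

variable {a b c : ℕ}

theorem comp {g : (Fin b → ℝ) → (Fin c → ℝ)} {f : (Fin a → ℝ) → (Fin b → ℝ)}
    (hg : IsAffineMap g) (hf : IsAffineMap f) : IsAffineMap (fun x => g (f x)) := by
  obtain ⟨A, u, hf⟩ := hf
  obtain ⟨B, v, hg⟩ := hg
  exact ⟨B * A, B.mulVec u + v, fun x => by
    simp [hf, hg, Matrix.mulVec_add, Matrix.mulVec_mulVec, add_assoc]⟩

theorem append {f : (Fin a → ℝ) → (Fin b → ℝ)} {g : (Fin a → ℝ) → (Fin c → ℝ)}
    (hf : IsAffineMap f) (hg : IsAffineMap g) : IsAffineMap (fun x => Fin.append (f x) (g x)) := by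
  rw [isAffineMap_iff_forall_apply] at hf hg ⊢
  intro i
  induction i using Fin.addCases with
  | left i => simpa using hf i
  | right i => simpa using hg i

protected theorem continuous {f : (Fin a → ℝ) → (Fin b → ℝ)} (hf : IsAffineMap f) :
    Continuous f := by
  obtain ⟨A, u, hf⟩ := hf
  rw [funext hf]
  exact (continuous_const.matrix_mulVec continuous_id).add continuous_const

end IsAffineMap

theorem isAffineMap_id {a : ℕ} : IsAffineMap (fun x : Fin a → ℝ => x) :=
  ⟨1, 0, fun x => by simp⟩

theorem isAffineMap_comp_right {a b : ℕ} (e : Fin b → Fin a) :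
    IsAffineMap (fun x : Fin a → ℝ => x ∘ e) :=
  isAffineMap_iff_forall_apply.2 fun i => ⟨Pi.single (e i) 1, 0, fun x => by simp⟩

theorem relu_append {a b : ℕ} (u : Fin a → ℝ) (v : Fin b → ℝ) :
    relu (Fin.append u v) = Fin.append (relu u) (relu v) := by
  funext i
  induction i using Fin.addCases <;> simp [relu]

theorem relu_of_nonneg {a : ℕ} {x : Fin a → ℝ} (hx : 0 ≤ x) : relu x = x :=
  funext fun i => max_eq_right (hx i)

theorem continuous_relu {a : ℕ} : Continuous (relu (m := a)) :=
  continuous_pi fun i => continuous_const.max (continuous_apply i)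

theorem Fin.append_comp_castAdd {α : Type*} {a b : ℕ} (u : Fin a → α) (v : Fin b → α) :
    Fin.append u v ∘ Fin.castAdd b = u :=
  funext fun i => Fin.append_left u v i

theorem Fin.append_comp_natAdd {α : Type*} {a b : ℕ} (u : Fin a → α) (v : Fin b → α) :
    Fin.append u v ∘ Fin.natAdd a = v :=
  funext fun i => Fin.append_right u v i

namespace RealizedBy

theorem depth_pos {L a b N : ℕ} {φ : (Fin a → ℝ) → (Fin b → ℝ)} (h : RealizedBy L a b φ N) :
    0 < L := by
  cases L with
  | zero => exact h.elim
  | succ L => exact L.succ_pos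

theorem width_le {L a b N : ℕ} {φ : (Fin a → ℝ) → (Fin b → ℝ)} (h : RealizedBy L a b φ N) :
    b ≤ N := by
  match L, h with
  | 1, ⟨_, hN⟩ => exact hN.ge
  | L + 2, ⟨_, _, _, _, _, _, hψ, hN, _⟩ => have := hψ.width_le; omega

protected theorem continuous {L a b N : ℕ} {φ : (Fin a → ℝ) → (Fin b → ℝ)}
    (h : RealizedBy L a b φ N) : Continuous φ := by
  match L, h with
  | 1, ⟨hφ, _⟩ => exact hφ.continuous
  | L + 2, ⟨_, _, _, _, _, hM, hψ, _, hφ⟩ =>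
    rw [funext hφ]
    exact hψ.continuous.comp (continuous_relu.comp hM.continuous)

theorem precomp_affine {L a b c N : ℕ} {φ : (Fin b → ℝ) → (Fin c → ℝ)}
    {M : (Fin a → ℝ) → (Fin b → ℝ)} (h : RealizedBy L b c φ N) (hM : IsAffineMap M) :
    RealizedBy L a c (fun x => φ (M x)) N := by
  match L, h with
  | 1, ⟨hφ, hN⟩ => exact ⟨hφ.comp hM, hN⟩
  | L + 2, ⟨m, M₁, ψ, N', hm, hM₁, hψ, hN, hφ⟩ =>
    exact ⟨m, fun x => M₁ (M x), ψ, N', hm, hM₁.comp hM, hψ, hN, fun x => hφ (M x)⟩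

/-- The last affine map of `φ` merges with the first one of `ψ`, so the `b` output neurons of
`φ` disappear. -/
theorem comp {L₁ L₂ a b c N₁ N₂ : ℕ} {φ : (Fin a → ℝ) → (Fin b → ℝ)}
    {ψ : (Fin b → ℝ) → (Fin c → ℝ)} (hφ : RealizedBy (L₁ + 1) a b φ N₁)
    (hψ : RealizedBy (L₂ + 1) b c ψ N₂) :
    RealizedBy (L₁ + L₂ + 1) a c (fun x => ψ (φ x)) (N₁ - b + N₂) := by
  match L₁, hφ with
  | 0, ⟨hφ, hN⟩ =>
    rw [hN, Nat.sub_self, Nat.zero_add, Nat.zero_add]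
    exact hψ.precomp_affine hφ
  | L₁ + 1, ⟨m, M₁, χ, N', hm, hM₁, hχ, hN, hφ⟩ =>
    have := hχ.width_le
    rw [show L₁ + 1 + L₂ + 1 = L₁ + L₂ + 2 by omega]
    exact ⟨m, M₁, fun y => ψ (χ y), N' - b + N₂, hm, hM₁, hχ.comp hψ, by omega,
      fun x => congrArg ψ (hφ x)⟩

theorem par {L a b a' b' N N' : ℕ} {φ : (Fin a → ℝ) → (Fin b → ℝ)}
    {φ' : (Fin a' → ℝ) → (Fin b' → ℝ)} (h : RealizedBy L a b φ N)
    (h' : RealizedBy L a' b' φ' N') :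
    RealizedBy L (a + a') (b + b')
      (fun x => Fin.append (φ (x ∘ Fin.castAdd a')) (φ' (x ∘ Fin.natAdd a))) (N + N') := by
  match L, h, h' with
  | 1, ⟨hφ, hN⟩, ⟨hφ', hN'⟩ =>
    exact ⟨(hφ.comp (isAffineMap_comp_right _)).append (hφ'.comp (isAffineMap_comp_right _)),
      by rw [hN, hN']⟩
  | L + 2, ⟨m, M, ψ, K, hm, hM, hψ, hN, hφ⟩, ⟨m', M', ψ', K', hm', hM', hψ', hN', hφ'⟩ =>
    refine ⟨m + m', fun x => Fin.append (M (x ∘ Fin.castAdd a')) (M' (x ∘ Fin.natAdd a)),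
      _, K + K', by omega,
      (hM.comp (isAffineMap_comp_right _)).append (hM'.comp (isAffineMap_comp_right _)),
      hψ.par hψ', by omega, fun x => ?_⟩
    simp only [relu_append, Fin.append_comp_castAdd, Fin.append_comp_natAdd, hφ, hφ']

end RealizedBy

theorem realizedBy_relu_iterate (K : ℕ) {a : ℕ} (ha : 0 < a) :
    RealizedBy (K + 1) a a relu^[K] (a * (K + 1)) := by
  induction K with
  | zero => exact ⟨isAffineMap_id, by simp⟩
  | succ K ih =>
    exact ⟨a, id, relu^[K], a * (K + 1), ha, isAffineMap_id, ih, by ring,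
      fun x => Function.iterate_succ_apply relu K x⟩

namespace RealizesOn

variable {f : ℝ → ℝ} {N L : ℕ}

theorem one_le_size (h : RealizesOn f N L) : 1 ≤ N :=
  let ⟨_, hφ, _⟩ := h
  hφ.width_le

theorem one_le_depth (h : RealizesOn f N L) : 1 ≤ L :=
  let ⟨_, hφ, _⟩ := h
  hφ.depth_pos

/-- The iterated ReLUs carrying `x` and `s` past the network for `f` are the identity only on
nonnegative inputs, so the block carries `s - c` and adds `c` back in its last affine map. -/
theorem exists_realizedBy_add_to_sum (hf : RealizesOn f N (L + 1)) (c : ℝ) :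
    ∃ ψ : (Fin 2 → ℝ) → (Fin 2 → ℝ), RealizedBy (L + 1) 2 2 ψ (N + 2 * L + 1) ∧
      ∀ x ∈ Icc (0 : ℝ) 1, ∀ s, c ≤ s → ψ ![x, s] = ![x, s + f x] := by
  obtain ⟨φ, hφ, hφf⟩ := hf
  let P : (Fin 2 → ℝ) → (Fin (2 + 1) → ℝ) := fun y => Fin.append ![y 0, y 1 - c] (fun _ => y 0)
  let Q : (Fin (2 + 1) → ℝ) → (Fin 2 → ℝ) := fun z => ![z 0, z 1 + z 2 + c]
  have hP : IsAffineMap P := by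
    refine IsAffineMap.append ?_ (isAffineMap_comp_right fun _ => 0)
    refine isAffineMap_iff_forall_apply.2 (Fin.forall_fin_two.2 ⟨?_, ?_⟩)
    · exact ⟨Pi.single 0 1, 0, fun y => by simp⟩
    · exact ⟨Pi.single 1 1, -c, fun y => by simp [sub_eq_add_neg]⟩
  have hQ : IsAffineMap Q := by
    refine isAffineMap_iff_forall_apply.2 (Fin.forall_fin_two.2 ⟨?_, ?_⟩)
    · exact ⟨Pi.single 0 1, 0, fun z => by simp [Q]⟩
    · exact ⟨Pi.single 1 1 + Pi.single 2 1, c, fun z => by simp [Q, add_dotProduct]⟩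
  have hψ := (((realizedBy_relu_iterate L two_pos).par hφ).precomp_affine hP).comp
    (L₂ := 0) (⟨hQ, rfl⟩ : RealizedBy 1 (2 + 1) 2 Q 2)
  have hN := hφ.width_le
  rw [Nat.add_zero, show 2 * (L + 1) + N - (2 + 1) + 2 = N + 2 * L + 1 by omega] at hψ
  refine ⟨_, hψ, fun x hx s hs => ?_⟩
  have hcarry : relu^[L] ![x, s - c] = ![x, s - c] :=
    Function.iterate_fixed (relu_of_nonneg (Fin.forall_fin_two.2 ⟨hx.1, by simpa using hs⟩)) L
  have hφx : φ (fun _ => x) = fun _ => f x :=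
    funext fun i => Subsingleton.elim i 0 ▸ hφf x hx
  simp only [P, Q, Fin.append_comp_castAdd, Fin.append_comp_natAdd, Matrix.cons_val_zero,
    Matrix.cons_val_one, hcarry, hφx]
  have : Fin.append ![x, s - c] (fun _ : Fin 1 => f x) = ![x, s - c, f x] := by
    ext i; fin_cases i <;> rfl
  simp [this, add_right_comm _ (f x) c]

end RealizesOn

theorem exists_realizedBy_sum (ℓ : ℕ) (f : Fin ℓ → ℝ → ℝ) (N L : Fin ℓ → ℕ)
    (h : ∀ i, RealizesOn (f i) (N i) (L i)) :
    ∃ Φ : (Fin 1 → ℝ) → (Fin 2 → ℝ),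
      RealizedBy (∑ i, (L i - 1) + 1) 1 2 Φ (∑ i, (N i + 2 * L i - 3) + 2) ∧
      ∀ x ∈ Icc (0 : ℝ) 1, Φ (fun _ => x) = ![x, ∑ i, f i x] := by
  induction ℓ with
  | zero =>
    have hΦ : IsAffineMap fun y : Fin 1 → ℝ => ![y 0, 0] :=
      isAffineMap_iff_forall_apply.2 (Fin.forall_fin_two.2
        ⟨⟨Pi.single 0 1, 0, fun y => by simp⟩, ⟨0, 0, fun y => by simp⟩⟩)
    exact ⟨_, ⟨hΦ, by simp⟩, fun x _ => by simp⟩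
  | succ ℓ ih =>
    obtain ⟨Φ, hΦ, hΦf⟩ := ih (fun i => f i.castSucc) (fun i => N i.castSucc)
      (fun i => L i.castSucc) (fun i => h _)
    obtain ⟨l, hl⟩ := Nat.exists_eq_add_one.2 (h (Fin.last ℓ)).one_le_depth
    have hN := (h (Fin.last ℓ)).one_le_size
    -- The running sum is bounded below on `[0, 1]` because `Φ` is continuous.
    obtain ⟨c, hc⟩ := (isCompact_Icc.image ((continuous_apply 1).comp
      (hΦ.continuous.comp (continuous_pi fun _ => continuous_id)))).bddBelow
    obtain ⟨ψ, hψ, hψf⟩ := (hl ▸ h (Fin.last ℓ)).exists_realizedBy_add_to_sum c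
    refine ⟨fun y => ψ (Φ y), ?_, fun x hx => ?_⟩
    · convert hΦ.comp hψ using 1 <;> simp only [Fin.sum_univ_castSucc, hl] <;> omega
    · have hcx : c ≤ ∑ i : Fin ℓ, f i.castSucc x := by
        simpa [hΦf x hx] using hc ⟨x, hx, rfl⟩
      simp [hΦf x hx, hψf x hx _ hcx, Fin.sum_univ_castSucc]

theorem add_lemma (ℓ : ℕ) (f : Fin ℓ → ℝ → ℝ) (N L : Fin ℓ → ℕ)
    (h : ∀ i, RealizesOn (f i) (N i) (L i)) :
    RealizesOn (fun x => ∑ i, f i x)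
      (∑ i, (N i + 2 * L i - 2) - ℓ + 1) (∑ i, L i - ℓ + 1) := by
  obtain ⟨Φ, hΦ, hΦf⟩ := exists_realizedBy_sum ℓ f N L h
  have hproj : RealizedBy 1 2 1 (fun y => y ∘ fun _ => 1) 1 := ⟨isAffineMap_comp_right _, rfl⟩
  have hsize : ∑ i, (N i + 2 * L i - 3) + 2 - 2 + 1 = ∑ i, (N i + 2 * L i - 2) - ℓ + 1 := by
    have h3 (i : Fin ℓ) : 3 ≤ N i + 2 * L i := by
      have := (h i).one_le_size; have := (h i).one_le_depth; omega
    rw [Finset.sum_tsub_distrib _ fun i _ => h3 i, Finset.sum_tsub_distrib _ fun i _ => by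
      have := h3 i; omega]
    simp only [Finset.sum_const, Finset.card_univ, Fintype.card_fin, smul_eq_mul]
    omega
  have hdepth : ∑ i, (L i - 1) + 0 + 1 = ∑ i, L i - ℓ + 1 := by
    rw [Finset.sum_tsub_distrib _ fun i _ => (h i).one_le_depth]
    simp
  refine ⟨_, hsize ▸ hdepth ▸ hΦ.comp hproj, fun x hx => ?_⟩
  simp [hΦf x hx]
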